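/- arXiv:2509.01435 — 2 statements merged into one kernel-verified Lean document; each statement's English description precedes it below -/
import Mathlib

section
/- In the large-variance limit, the posterior odds of a normal RMP depend on ω and σ_rob² only through β = Ω/R: for any two pairs (ω₁, σ_rob,1²) and (ω₂, σ_rob,2²) with Ω₁/R₁ = Ω₂/R₂, the limit as both σ_rob,i² → ∞ (along sequences preserving β) of the ratio Ω̃₁(x_c)/Ω̃₂(x_c) equals 1 for every x_c. More precisely: the asymptotic relation Ω̃(x_c) ~ (Ω/R)·exp((x_c−μ_inf)²/(2 v_inf²)) holds as σ_rob² → ∞ with x_c fixed. -/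
open Real Filter

/-- Asymptotic equivalence `Otilde(x_c) ~ (Ω/R)·exp((x_c−μ_inf)²/(2v_inf²))` as
`σ_rob² → ∞`: the posterior odds depend on `(ω, σ_rob²)` only through `β = Ω/R`
in the large-variance limit. -/
theorem posterior_odds_asymptotic
    (σc2 σinf2 μinf μrob ω xc : ℝ)
    (hσc : 0 < σc2) (hσinf : 0 < σinf2) (hω0 : 0 < ω) (hω1 : ω < 1) :
    Tendsto
      (fun σrob2 : ℝ =>
        let vinf2 := σinf2 + σc2
        let R := Real.sqrt (σrob2 + σc2) / Real.sqrt vinf2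
        let Ω := ω / (1 - ω)
        let Otilde := (Ω / R) *
          Real.exp ((xc - μinf) ^ 2 / (2 * vinf2) - (xc - μrob) ^ 2 / (2 * R ^ 2 * vinf2))
        Otilde * (R / Ω) * Real.exp (-((xc - μinf) ^ 2) / (2 * vinf2)))
      atTop (nhds 1) := by
  have hvinf : (0:ℝ) < σinf2 + σc2 := by linarith
  have hΩ : (0:ℝ) < ω / (1 - ω) := div_pos hω0 (by linarith)
  -- the target auxiliary limit: exp(−(xc−μrob)²/(2(σrob2+σc2))) → 1
  have haux : Tendsto (fun σrob2 : ℝ =>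
      Real.exp (-((xc - μrob) ^ 2) / (2 * (σrob2 + σc2)))) atTop (nhds 1) := by
    have h1 : Tendsto (fun σrob2 : ℝ => 2 * (σrob2 + σc2)) atTop atTop := by
      apply Tendsto.const_mul_atTop (by norm_num : (0:ℝ) < 2)
      exact tendsto_atTop_add_const_right _ σc2 tendsto_id
    have h2 : Tendsto (fun σrob2 : ℝ => -((xc - μrob) ^ 2) / (2 * (σrob2 + σc2)))
        atTop (nhds 0) := Tendsto.div_atTop tendsto_const_nhds h1
    simpa [Function.comp_def] using (Real.continuous_exp.continuousAt.tendsto.comp h2)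
  refine haux.congr' ?_
  filter_upwards [eventually_gt_atTop (0:ℝ)] with σrob2 hσrob
  simp only
  have hvrob : (0:ℝ) < σrob2 + σc2 := by linarith
  set R := Real.sqrt (σrob2 + σc2) / Real.sqrt (σinf2 + σc2) with hR
  have hRpos : 0 < R := div_pos (Real.sqrt_pos.mpr hvrob) (Real.sqrt_pos.mpr hvinf)
  have hR2 : R ^ 2 * (σinf2 + σc2) = σrob2 + σc2 := by
    rw [hR, div_pow, Real.sq_sqrt hvrob.le, Real.sq_sqrt hvinf.le]
    field_simp
  have h1ω : (0:ℝ) < 1 - ω := by linarith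
  have hcancel : ω / (1 - ω) / R * (R / (ω / (1 - ω))) = 1 := by
    field_simp
  rw [show ω / (1 - ω) / R *
        Real.exp ((xc - μinf) ^ 2 / (2 * (σinf2 + σc2)) -
          (xc - μrob) ^ 2 / (2 * R ^ 2 * (σinf2 + σc2))) * (R / (ω / (1 - ω))) *
        Real.exp (-(xc - μinf) ^ 2 / (2 * (σinf2 + σc2)))
      = (ω / (1 - ω) / R * (R / (ω / (1 - ω)))) *
        (Real.exp ((xc - μinf) ^ 2 / (2 * (σinf2 + σc2)) -
          (xc - μrob) ^ 2 / (2 * R ^ 2 * (σinf2 + σc2))) *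
         Real.exp (-(xc - μinf) ^ 2 / (2 * (σinf2 + σc2)))) from by ring,
    hcancel, one_mul, ← Real.exp_add]
  congr 1
  rw [show 2 * R ^ 2 * (σinf2 + σc2) = 2 * (σrob2 + σc2) from by rw [← hR2]; ring]
  ring
end

section
/- Theorem 2 (location-insensitivity): Let g^(i)(θ|x_c) denote the posterior density under the RMP with robust component N(μ_rob^(i), σ_rob²), i=1,2, sharing the same ω ∈ (0,1), informative component N(μ_inf, σ_inf²), and likelihood N(θ, σ_c²). Then for every θ and x_c, lim_{σ_rob²→∞} g^(1)(θ|x_c) = lim_{σ_rob²→∞} g^(2)(θ|x_c); i.e., both limits exist and are equal, independently of μ_rob^(1), μ_rob^(2). -/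
open Real Filter

/-- Normal density with mean `μ` and variance `v`, evaluated at `x`. -/
noncomputable def normalPDF (μ v x : ℝ) : ℝ :=
  (Real.sqrt (2 * Real.pi * v))⁻¹ * Real.exp (-((x - μ) ^ 2) / (2 * v))

/-- Posterior weight of the normal RMP with robust location `μrob` and robust
variance `σrob2`, at observation `xc`. -/
noncomputable def postWeight (σc2 σinf2 μinf μrob ω σrob2 xc : ℝ) : ℝ :=
  ω * normalPDF μinf (σinf2 + σc2) xc /
    (ω * normalPDF μinf (σinf2 + σc2) xc + (1 - ω) * normalPDF μrob (σrob2 + σc2) xc)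

/-- Posterior density of the normal RMP, as a mixture of conjugate normal
posteriors, evaluated at `θ`. -/
noncomputable def rmpPosterior (σc2 σinf2 μinf μrob ω σrob2 xc θ : ℝ) : ℝ :=
  postWeight σc2 σinf2 μinf μrob ω σrob2 xc *
      normalPDF ((σinf2 * xc + σc2 * μinf) / (σc2 + σinf2)) (σc2 * σinf2 / (σc2 + σinf2)) θ +
    (1 - postWeight σc2 σinf2 μinf μrob ω σrob2 xc) *
      normalPDF ((σrob2 * xc + σc2 * μrob) / (σc2 + σrob2)) (σc2 * σrob2 / (σc2 + σrob2)) θ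

lemma sqrt_tendsto_atTop : Tendsto Real.sqrt atTop atTop :=
  tendsto_atTop_atTop_of_monotone (fun _ _ h => Real.sqrt_le_sqrt h)
    (fun b => ⟨b ^ 2, by rw [Real.sqrt_sq_eq_abs]; exact le_abs_self b⟩)

lemma normalPDF_pos (μ x : ℝ) {v : ℝ} (hv : 0 < v) : 0 < normalPDF μ v x := by
  unfold normalPDF
  have h2 : 0 < 2 * Real.pi * v := by positivity
  have := Real.sqrt_pos.mpr h2
  positivity

lemma tendsto_normalPDF_zero (μ xc σc2 : ℝ) :
    Tendsto (fun v : ℝ => normalPDF μ (v + σc2) xc) atTop (nhds 0) := by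
  have hv : Tendsto (fun v : ℝ => v + σc2) atTop atTop :=
    tendsto_atTop_add_const_right _ _ tendsto_id
  have h2v : Tendsto (fun v : ℝ => 2 * Real.pi * (v + σc2)) atTop atTop := by
    apply Tendsto.const_mul_atTop (by positivity) hv
  have h1 : Tendsto (fun v : ℝ => (Real.sqrt (2 * Real.pi * (v + σc2)))⁻¹) atTop (nhds 0) :=
    tendsto_inv_atTop_zero.comp (sqrt_tendsto_atTop.comp h2v)
  have hden : Tendsto (fun v : ℝ => 2 * (v + σc2)) atTop atTop :=
    Tendsto.const_mul_atTop (by norm_num) hv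
  have harg : Tendsto (fun v : ℝ => -((xc - μ) ^ 2) / (2 * (v + σc2))) atTop (nhds 0) :=
    Tendsto.div_atTop tendsto_const_nhds hden
  have h2 : Tendsto (fun v : ℝ => Real.exp (-((xc - μ) ^ 2) / (2 * (v + σc2)))) atTop
      (nhds 1) := by
    simpa [Function.comp_def] using (Real.continuous_exp.tendsto 0).comp harg
  have := h1.mul h2
  simpa [normalPDF] using this

lemma rmp_tendsto (σc2 σinf2 μinf μrob ω : ℝ)
    (hσc : 0 < σc2) (hσinf : 0 < σinf2) (hω0 : 0 < ω) (hω1 : ω < 1) (xc θ : ℝ) :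
    Tendsto (fun σrob2 : ℝ => rmpPosterior σc2 σinf2 μinf μrob ω σrob2 xc θ) atTop
      (nhds (normalPDF ((σinf2 * xc + σc2 * μinf) / (σc2 + σinf2))
        (σc2 * σinf2 / (σc2 + σinf2)) θ)) := by
  set A := normalPDF μinf (σinf2 + σc2) xc with hA
  have hApos : 0 < A := normalPDF_pos _ _ (by linarith)
  have hf0 : Tendsto (fun s : ℝ => normalPDF μrob (s + σc2) xc) atTop (nhds 0) :=
    tendsto_normalPDF_zero μrob xc σc2
  -- posterior weight tends to 1
  have hden : Tendsto (fun s : ℝ => ω * A + (1 - ω) * normalPDF μrob (s + σc2) xc) atTop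
      (nhds (ω * A)) := by
    have := (tendsto_const_nhds (x := ω * A)).add ((tendsto_const_nhds (x := 1 - ω)).mul hf0)
    simpa using this
  have hwA : ω * A ≠ 0 := by positivity
  have hw : Tendsto (fun s : ℝ => postWeight σc2 σinf2 μinf μrob ω s xc) atTop (nhds 1) := by
    have := (tendsto_const_nhds (x := ω * A)).div hden hwA
    simpa [postWeight, ← hA, div_self hwA, Pi.div_def] using this
  -- denominator σc2 + s tends to atTop
  have hsum : Tendsto (fun s : ℝ => σc2 + s) atTop atTop :=
    tendsto_atTop_add_const_left _ _ tendsto_id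
  -- mean tends to xc
  have hmean : Tendsto (fun s : ℝ => (s * xc + σc2 * μrob) / (σc2 + s)) atTop (nhds xc) := by
    have h1 : Tendsto (fun s : ℝ => xc + (σc2 * μrob - σc2 * xc) / (σc2 + s)) atTop
        (nhds xc) := by
      have := (tendsto_const_nhds (x := xc)).add
        (Tendsto.div_atTop (tendsto_const_nhds (x := σc2 * μrob - σc2 * xc)) hsum)
      simpa using this
    refine h1.congr' ?_
    filter_upwards [eventually_gt_atTop 0] with s hs
    have hne : σc2 + s ≠ 0 := by positivity
    field_simp
    ring
  -- variance tends to σc2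
  have hvar : Tendsto (fun s : ℝ => σc2 * s / (σc2 + s)) atTop (nhds σc2) := by
    have h1 : Tendsto (fun s : ℝ => σc2 - σc2 ^ 2 / (σc2 + s)) atTop (nhds σc2) := by
      have := (tendsto_const_nhds (x := σc2)).sub
        (Tendsto.div_atTop (tendsto_const_nhds (x := σc2 ^ 2)) hsum)
      simpa using this
    refine h1.congr' ?_
    filter_upwards [eventually_gt_atTop 0] with s hs
    have hne : σc2 + s ≠ 0 := by positivity
    field_simp
    ring
  -- the robust-component normal pdf tends to normalPDF xc σc2 θ
  have hsq : Real.sqrt (2 * Real.pi * σc2) ≠ 0 := by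
    have : 0 < 2 * Real.pi * σc2 := by positivity
    exact ne_of_gt (Real.sqrt_pos.mpr this)
  have hpdf : Tendsto (fun s : ℝ =>
      normalPDF ((s * xc + σc2 * μrob) / (σc2 + s)) (σc2 * s / (σc2 + s)) θ) atTop
      (nhds (normalPDF xc σc2 θ)) := by
    unfold normalPDF
    have hsqv : Tendsto (fun s : ℝ => (Real.sqrt (2 * Real.pi * (σc2 * s / (σc2 + s))))⁻¹)
        atTop (nhds ((Real.sqrt (2 * Real.pi * σc2))⁻¹)) := by
      exact (((Real.continuous_sqrt.tendsto _).comp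
        ((tendsto_const_nhds (x := 2 * Real.pi)).mul hvar)).inv₀ hsq)
    have harg : Tendsto (fun s : ℝ =>
        -((θ - (s * xc + σc2 * μrob) / (σc2 + s)) ^ 2) / (2 * (σc2 * s / (σc2 + s)))) atTop
        (nhds (-((θ - xc) ^ 2) / (2 * σc2))) := by
      have hnum : Tendsto (fun s : ℝ => -((θ - (s * xc + σc2 * μrob) / (σc2 + s)) ^ 2)) atTop
          (nhds (-((θ - xc) ^ 2))) := by
        exact (((tendsto_const_nhds (x := θ)).sub hmean).pow 2).neg
      have hd : Tendsto (fun s : ℝ => 2 * (σc2 * s / (σc2 + s))) atTop (nhds (2 * σc2)) :=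
        (tendsto_const_nhds (x := (2:ℝ))).mul hvar
      exact hnum.div hd (by positivity)
    exact hsqv.mul ((Real.continuous_exp.tendsto _).comp harg)
  -- assemble
  have hterm2 : Tendsto (fun s : ℝ => (1 - postWeight σc2 σinf2 μinf μrob ω s xc) *
      normalPDF ((s * xc + σc2 * μrob) / (σc2 + s)) (σc2 * s / (σc2 + s)) θ) atTop
      (nhds 0) := by
    have h1 : Tendsto (fun s : ℝ => 1 - postWeight σc2 σinf2 μinf μrob ω s xc) atTop
        (nhds 0) := by
      have := (tendsto_const_nhds (x := (1:ℝ))).sub hw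
      simpa using this
    simpa using h1.mul hpdf
  have hterm1 : Tendsto (fun s : ℝ => postWeight σc2 σinf2 μinf μrob ω s xc *
      normalPDF ((σinf2 * xc + σc2 * μinf) / (σc2 + σinf2)) (σc2 * σinf2 / (σc2 + σinf2)) θ)
      atTop (nhds (normalPDF ((σinf2 * xc + σc2 * μinf) / (σc2 + σinf2))
        (σc2 * σinf2 / (σc2 + σinf2)) θ)) := by
    have := hw.mul (tendsto_const_nhds (x := normalPDF ((σinf2 * xc + σc2 * μinf) / (σc2 + σinf2))
      (σc2 * σinf2 / (σc2 + σinf2)) θ))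
    simpa using this
  have := hterm1.add hterm2
  simpa [rmpPosterior] using this

/-- Theorem 2 (location-insensitivity): in the limit `σ_rob² → ∞`, the RMP
posterior densities corresponding to two different robust locations both
converge, and to the same limit, for every `θ` and `x_c`. -/
theorem rmp_posterior_location_insensitive
    (σc2 σinf2 μinf μrob₁ μrob₂ ω : ℝ)
    (hσc : 0 < σc2) (hσinf : 0 < σinf2) (hω0 : 0 < ω) (hω1 : ω < 1) :
    ∀ xc θ : ℝ, ∃ L : ℝ,
      Tendsto (fun σrob2 : ℝ => rmpPosterior σc2 σinf2 μinf μrob₁ ω σrob2 xc θ)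
        atTop (nhds L) ∧
      Tendsto (fun σrob2 : ℝ => rmpPosterior σc2 σinf2 μinf μrob₂ ω σrob2 xc θ)
        atTop (nhds L) := by
  intro xc θ
  exact ⟨_, rmp_tendsto σc2 σinf2 μinf μrob₁ ω hσc hσinf hω0 hω1 xc θ,
    rmp_tendsto σc2 σinf2 μinf μrob₂ ω hσc hσinf hω0 hω1 xc θ⟩
end
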